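/- The Sinkhorn scaling of a strictly positive kernel satisfies the prescribed marginals exactly at a fixed point: if u, v are positive vectors such that R = diag(u)·A·diag(v) has row sums r and column sums c, then R is the unique element of the transportation polytope U(r,c) of the form diag(u)·A·diag(v), up to the scaling (u,v) ↦ (λu, v/λ). -/

import Mathlib

/-!
Write `u' i = x i * u i` and `v' j = y j * v j`, so that the second scaled matrix is
`x i * y j * K i j` with `K = diag(u) A diag(v)`, and both have the row and column sums of `K`.
Let `x i₀` be the largest `x i`. Each column sum then gives `1 ≤ x i₀ * y j`; since row `i₀`
has the same sum with and without the factors `x i₀ * y j`, these are all equal to `1`; and then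
each column forces `x i * y j = 1` as well, because now `x i * y j ≤ x i₀ * y j = 1`.
So `x` is constant and `y` is its inverse.
-/

open Finset

section

variable {ι κ : Type*}

theorem exists_eq_and_eq_inv_of_mul_eq_one {x : ι → ℝ} {y : κ → ℝ} (hy : ∀ j, 0 ≤ y j)
    (hne : Nonempty ι ↔ Nonempty κ) (hxy : ∀ i j, x i * y j = 1) :
    ∃ lam : ℝ, 0 < lam ∧ (∀ i, x i = lam) ∧ ∀ j, y j = lam⁻¹ := by
  rcases isEmpty_or_nonempty κ with hκ | ⟨⟨j₀⟩⟩
  · have : IsEmpty ι := not_nonempty_iff.mp fun h ↦ not_nonempty_iff.mpr hκ (hne.mp h)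
    exact ⟨1, one_pos, isEmptyElim, isEmptyElim⟩
  obtain ⟨i₀⟩ := hne.mpr ⟨j₀⟩
  have hy₀ : y j₀ ≠ 0 := right_ne_zero_of_mul_eq_one (hxy i₀ j₀)
  refine ⟨(y j₀)⁻¹, inv_pos.mpr ((hy j₀).lt_of_ne' hy₀),
    fun i ↦ eq_inv_of_mul_eq_one_left (hxy i j₀), fun j ↦ ?_⟩
  rw [inv_inv, eq_inv_of_mul_eq_one_right (hxy i₀ j), eq_inv_of_mul_eq_one_right (hxy i₀ j₀)]

variable [Fintype ι] [Fintype κ]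

theorem eq_of_le_of_sum_mul_eq {a b w : κ → ℝ} (hw : ∀ j, 0 < w j) (hle : ∀ j, a j ≤ b j)
    (hsum : ∑ j, a j * w j = ∑ j, b j * w j) (j : κ) : a j = b j := by
  have hle' (j : κ) (_ : j ∈ univ) : a j * w j ≤ b j * w j :=
    mul_le_mul_of_nonneg_right (hle j) (hw j).le
  have hterm := (sum_eq_sum_iff_of_le hle').mp hsum j (mem_univ j)
  exact mul_right_cancel₀ (hw j).ne' hterm

theorem mul_eq_one_of_scaled_sums_eq {K : ι → κ → ℝ} (hK : ∀ i j, 0 < K i j) {x : ι → ℝ}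
    {y : κ → ℝ} (hy : ∀ j, 0 ≤ y j) (hrow : ∀ i, ∑ j, x i * y j * K i j = ∑ j, K i j)
    (hcol : ∀ j, ∑ i, x i * y j * K i j = ∑ i, K i j) (i : ι) (j : κ) : x i * y j = 1 := by
  have : Nonempty ι := ⟨i⟩
  obtain ⟨i₀, hi₀⟩ := Finite.exists_max x
  have hcol_le (j : κ) : 1 ≤ x i₀ * y j := by
    have hpos : 0 < ∑ i, K i j := sum_pos (fun i _ ↦ hK i j) univ_nonempty
    refine le_of_mul_le_mul_right ?_ hpos
    calc 1 * ∑ i, K i j = ∑ i, x i * y j * K i j := by rw [one_mul, hcol]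
      _ ≤ ∑ i, x i₀ * y j * K i j := by
        gcongr with i
        · exact (hK i j).le
        · exact hy j
        · exact hi₀ i
      _ = x i₀ * y j * ∑ i, K i j := by rw [mul_sum]
  have hrow_eq (j : κ) : 1 = x i₀ * y j :=
    eq_of_le_of_sum_mul_eq (hK i₀) hcol_le (by simpa only [one_mul] using (hrow i₀).symm) j
  refine eq_of_le_of_sum_mul_eq (a := fun i ↦ x i * y j) (b := fun _ ↦ 1) (fun i ↦ hK i j)
    (fun i ↦ ?_) (by simpa only [one_mul] using hcol j) i
  rw [hrow_eq j]
  exact mul_le_mul_of_nonneg_right (hi₀ i) (hy j)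

theorem nonempty_of_sum_pos {f : κ → ℝ} (h : 0 < ∑ j, f j) : Nonempty κ :=
  univ_nonempty_iff.mp (nonempty_of_sum_ne_zero h.ne')

end

theorem sinkhorn_scaling_unique_general
    {m n : ℕ}
    (A : Fin m → Fin n → ℝ) (hA : ∀ i j, 0 < A i j)
    (r : Fin m → ℝ) (c : Fin n → ℝ)
    (hr : ∀ i, 0 < r i) (hc : ∀ j, 0 < c j)
    (u : Fin m → ℝ) (v : Fin n → ℝ) (u' : Fin m → ℝ) (v' : Fin n → ℝ)
    (hu : ∀ i, 0 < u i) (hv : ∀ j, 0 < v j)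
    (hv' : ∀ j, 0 < v' j)
    (hrow : ∀ i, ∑ j : Fin n, u i * A i j * v j = r i)
    (hcol : ∀ j, ∑ i : Fin m, u i * A i j * v j = c j)
    (hrow' : ∀ i, ∑ j : Fin n, u' i * A i j * v' j = r i)
    (hcol' : ∀ j, ∑ i : Fin m, u' i * A i j * v' j = c j) :
    ∃ lam : ℝ, 0 < lam ∧ (∀ i, u' i = lam * u i) ∧ (∀ j, v' j = v j / lam) ∧
      ∀ i j, u' i * A i j * v' j = u i * A i j * v j := by
  have hscaled (i : Fin m) (j : Fin n) :
      u' i * A i j * v' j = u' i / u i * (v' j / v j) * (u i * A i j * v j) := by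
    field_simp [(hu i).ne', (hv j).ne']
  have hne : Nonempty (Fin m) ↔ Nonempty (Fin n) :=
    ⟨fun ⟨i⟩ ↦ nonempty_of_sum_pos ((hrow i).symm ▸ hr i),
      fun ⟨j⟩ ↦ nonempty_of_sum_pos ((hcol j).symm ▸ hc j)⟩
  have hy (j : Fin n) : 0 ≤ v' j / v j := (div_pos (hv' j) (hv j)).le
  have hxy := mul_eq_one_of_scaled_sums_eq (x := fun i ↦ u' i / u i)
    (fun i j ↦ mul_pos (mul_pos (hu i) (hA i j)) (hv j)) hy
    (fun i ↦ by simp only [← hscaled, hrow, hrow'])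
    (fun j ↦ by simp only [← hscaled, hcol, hcol'])
  obtain ⟨lam, hlam, hu'_div, hv'_div⟩ := exists_eq_and_eq_inv_of_mul_eq_one hy hne hxy
  have hu'_eq (i : Fin m) : u' i = lam * u i := by
    rw [← hu'_div i, div_mul_cancel₀ _ (hu i).ne']
  have hv'_eq (j : Fin n) : v' j = v j / lam := by
    rw [div_eq_inv_mul, ← hv'_div j, div_mul_cancel₀ _ (hv j).ne']
  refine ⟨lam, hlam, hu'_eq, hv'_eq, fun i j ↦ ?_⟩
  rw [hu'_eq, hv'_eq]
  field_simp

/-- Uniqueness of Sinkhorn scalings of a strictly positive kernel: if both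
`diag(u) A diag(v)` and `diag(u') A diag(v')` lie in the transportation
polytope `U(r,c)` (row sums `r`, column sums `c`), with all scaling vectors
positive, then `(u',v') = (λu, v/λ)` for some `λ > 0`, and hence the two
scaled matrices coincide. -/
theorem sinkhorn_scaling_unique
    {m n : ℕ}
    (A : Fin m → Fin n → ℝ) (hA : ∀ i j, 0 < A i j)
    (r : Fin m → ℝ) (c : Fin n → ℝ)
    (hr : ∀ i, 0 < r i) (hc : ∀ j, 0 < c j)
    (hrc : ∑ i : Fin m, r i = ∑ j : Fin n, c j)
    (u : Fin m → ℝ) (v : Fin n → ℝ) (u' : Fin m → ℝ) (v' : Fin n → ℝ)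
    (hu : ∀ i, 0 < u i) (hv : ∀ j, 0 < v j)
    (hu' : ∀ i, 0 < u' i) (hv' : ∀ j, 0 < v' j)
    (hrow : ∀ i, ∑ j : Fin n, u i * A i j * v j = r i)
    (hcol : ∀ j, ∑ i : Fin m, u i * A i j * v j = c j)
    (hrow' : ∀ i, ∑ j : Fin n, u' i * A i j * v' j = r i)
    (hcol' : ∀ j, ∑ i : Fin m, u' i * A i j * v' j = c j) :
    ∃ lam : ℝ, 0 < lam ∧ (∀ i, u' i = lam * u i) ∧ (∀ j, v' j = v j / lam) ∧
      ∀ i j, u' i * A i j * v' j = u i * A i j * v j :=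
  sinkhorn_scaling_unique_general A hA r c hr hc u v u' v' hu hv hv' hrow hcol hrow' hcol'
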